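/- For every countable ordinal ξ, the Schreier family 𝒮_ξ satisfies ι(𝒮_ξ) = ω^ξ. -/

import Mathlib

open Ordinal

/-- A family of finite subsets of `ℕ` is hereditary if it contains all subsets of
its members. -/
def IsHereditary (F : Set (Finset ℕ)) : Prop := ∀ E ∈ F, ∀ G ⊆ E, G ∈ F

/-- A family of finite subsets of `ℕ` is spreading if it is closed under replacing
the elements of a member by larger ones, preserving the order. -/
def IsSpreading (F : Set (Finset ℕ)) : Prop :=
  ∀ E ∈ F, ∀ f : ℕ → ℕ, StrictMonoOn f (E : Set ℕ) → (∀ n ∈ E, n ≤ f n) →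
    E.image f ∈ F

/-- A family of finite subsets of `ℕ` is regular if it is compact (as a subset of
the Cantor set `2^ℕ`, identifying sets with their indicator functions), spreading
and hereditary. -/
def IsRegularFamily (F : Set (Finset ℕ)) : Prop :=
  IsCompact ((fun (E : Finset ℕ) (n : ℕ) => decide (n ∈ E)) '' F) ∧
    IsSpreading F ∧ IsHereditary F

/-- The derivative of a family: remove the maximal elements (those admitting no
extension by a larger element within the family). -/
def famDeriv (F : Set (Finset ℕ)) : Set (Finset ℕ) :=
  {E ∈ F | ∃ n : ℕ, (∀ m ∈ E, m < n) ∧ insert n E ∈ F}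

/-- Transfinite iterates of the family derivative. -/
noncomputable def famIter (F : Set (Finset ℕ)) (ξ : Ordinal) : Set (Finset ℕ) :=
  Ordinal.limitRecOn ξ F (fun _ ih => famDeriv ih)
    (fun o _ ih => ⋂ (ζ : Set.Iio o), ih ζ.1 ζ.2)

/-- The Cantor–Bendixson-type index of a family: the least ordinal `ξ` such that
`d^ξ(F) ⊆ {∅}`. -/
noncomputable def famIota (F : Set (Finset ℕ)) : Ordinal :=
  sInf {ξ : Ordinal | famIter F ξ ⊆ {(∅ : Finset ℕ)}}

/-- The "sum" `(𝒻,𝒢)` of two families: all unions `E ∪ F` with `E ∈ 𝒻`, `F ∈ 𝒢`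
and `max E < min F`, together with `𝒻` and `𝒢`. -/
def famSum (F G : Set (Finset ℕ)) : Set (Finset ℕ) :=
  {H : Finset ℕ | ∃ E ∈ F, ∃ E' ∈ G, (∀ m ∈ E, ∀ n ∈ E', m < n) ∧ H = E ∪ E'} ∪ F ∪ G

/-- The "product" `𝒻[𝒢]` of two families: unions of `𝒻`-admissible sequences of
members of `𝒢`, i.e. `E_1 < … < E_s` with each `E_i ∈ 𝒢` and `(min E_i)_i ∈ 𝒻`. -/
def famProd (F G : Set (Finset ℕ)) : Set (Finset ℕ) :=
  {H : Finset ℕ | ∃ l : List {E : Finset ℕ // E.Nonempty},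
    l ≠ [] ∧ (∀ E ∈ l, (E : Finset ℕ) ∈ G) ∧
    l.Chain' (fun E E' => ∀ m ∈ (E : Finset ℕ), ∀ n ∈ (E' : Finset ℕ), m < n) ∧
    (l.map fun E => E.1.min' E.2).toFinset ∈ F ∧
    H = l.foldr (fun E acc => E.1 ∪ acc) ∅}

/-- The family `𝒮 = {E : |E| ≤ min E}` (vacuously including `∅`). -/
def schreierUnit : Set (Finset ℕ) := {E : Finset ℕ | ∀ n ∈ E, E.card ≤ n}

/-- `IsSchreier ξ F` holds when `F` is a Schreier family of order `ξ`, i.e. arises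
from the recursion `𝒮_0 = 𝒜_1`, `𝒮_(ξ+1) = 𝒮[𝒮_ξ]`, and at limits a diagonal union
along some `ξ_n ↑ ξ` chosen so that the families increase. -/
inductive IsSchreier : Ordinal → Set (Finset ℕ) → Prop
  | zero : IsSchreier 0 {E : Finset ℕ | E.card ≤ 1}
  | succ (ξ : Ordinal) (F : Set (Finset ℕ)) :
      IsSchreier ξ F → IsSchreier (ξ + 1) (famProd schreierUnit F)
  | limit (ξ : Ordinal) (hξ : Order.IsSuccLimit ξ) (o : ℕ → Ordinal) (Fs : ℕ → Set (Finset ℕ)) :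
      StrictMono o → (∀ n, o n < ξ) → (∀ ζ < ξ, ∃ n, ζ ≤ o n) →
      (∀ n, IsSchreier (o n + 1) (Fs n)) → (∀ n, Fs n ⊆ Fs (n + 1)) →
      IsSchreier ξ {E : Finset ℕ | ∃ n : ℕ, (∀ m ∈ E, n ≤ m) ∧ E ∈ Fs n}

/-!
The upper bound `ι(𝒮_ξ) ≤ ω^ξ` comes from a rank function `μ < ω^ξ` that strictly decreases along
one-point end extensions inside the family. For `𝒮[F]` the rank of `H` is the largest value of
`ω^ξ · r + μ b + 1` over all decompositions of `H` into `F`-blocks with last block `b` and room for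
`r` further blocks: removing `max H` either shrinks `b` or deletes it and frees a block, and either
way the value increases. For the lower bound, a decomposition with `r` free blocks whose last block
lies in `d^β(F)` survives `ω^ξ · r + β` derivations: extend the last block while possible, otherwise
open a new singleton block, chosen in `d^γ(F)` for a suitable `γ < ω^ξ`. At limits both bounds are
inherited from the families `𝒮_{ξ_n + 1}`, since a set `E` only sees the family indexed by `min E`.
-/

open Finset

theorem famIter_zero (F : Set (Finset ℕ)) : famIter F 0 = F :=
  limitRecOn_zero _ _ _

theorem famIter_add_one (F : Set (Finset ℕ)) (α : Ordinal) :
    famIter F (α + 1) = famDeriv (famIter F α) := by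
  rw [famIter, limitRecOn_add_one]; rfl

theorem famIter_of_isSuccLimit (F : Set (Finset ℕ)) {α : Ordinal} (h : Order.IsSuccLimit α) :
    famIter F α = ⋂ ζ : Set.Iio α, famIter F ζ.1 := by
  rw [famIter, limitRecOn_limit _ _ _ _ h]; rfl

theorem mem_famIter_iff {F : Set (Finset ℕ)} {δ : Ordinal} {E : Finset ℕ} :
    E ∈ famIter F δ ↔
      E ∈ F ∧ ∀ γ < δ, ∃ n, (∀ m ∈ E, m < n) ∧ insert n E ∈ famIter F γ := by
  induction δ using limitRecOn generalizing E with
  | zero => simp [famIter_zero]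
  | add_one γ ih =>
    simp only [famIter_add_one, famDeriv, Set.mem_ofPred_eq, ih, Order.lt_add_one_iff,
      le_iff_lt_or_eq, or_imp, forall_and, forall_eq, and_assoc]
  | limit δ hδ ih =>
    simp only [famIter_of_isSuccLimit F hδ, Set.mem_iInter, Subtype.forall, Set.mem_Iio]
    constructor
    · intro h
      exact ⟨((ih 0 hδ.bot_lt).1 (h 0 hδ.bot_lt)).1, fun γ hγ =>
        ((ih _ (hδ.add_one_lt hγ)).1 (h _ (hδ.add_one_lt hγ))).2 γ (lt_add_one γ)⟩
    · exact fun ⟨hE, hext⟩ β hβ => (ih β hβ).2 ⟨hE, fun γ hγ => hext γ (hγ.trans hβ)⟩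

theorem mem_of_mem_famIter {F : Set (Finset ℕ)} {δ : Ordinal} {E : Finset ℕ}
    (h : E ∈ famIter F δ) : E ∈ F :=
  (mem_famIter_iff.1 h).1

def IsRank (F : Set (Finset ℕ)) (μ : Finset ℕ → Ordinal) : Prop :=
  ∀ E : Finset ℕ, E.Nonempty → ∀ n, (∀ m ∈ E, m < n) → insert n E ∈ F → μ (insert n E) < μ E

-- The empty prefix is excluded: `{n} ∈ 𝒮[F]` but `∅ ∉ 𝒮[F]`.
def IsPrefixClosed (F : Set (Finset ℕ)) : Prop :=
  ∀ E : Finset ℕ, E.Nonempty → ∀ n, (∀ m ∈ E, m < n) → insert n E ∈ F → E ∈ F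

theorem IsRank.le_of_mem_famIter {F : Set (Finset ℕ)} {μ : Finset ℕ → Ordinal} (hμ : IsRank F μ)
    {α : Ordinal} {E : Finset ℕ} (hE : E ∈ famIter F α) (hne : E.Nonempty) : α ≤ μ E := by
  induction α using WellFoundedLT.induction generalizing E with
  | _ α ih =>
  refine le_of_forall_lt fun γ hγ => ?_
  obtain ⟨n, hn, hins⟩ := (mem_famIter_iff.1 hE).2 γ hγ
  exact (ih γ hγ hins (insert_nonempty n E)).trans_lt
    (hμ E hne n hn (mem_of_mem_famIter hins))

theorem famIota_eq_of_isRank {F : Set (Finset ℕ)} {c : Ordinal} {μ : Finset ℕ → Ordinal}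
    (hμ : IsRank F μ) (hμc : ∀ E, μ E < c)
    (hlow : ∀ γ < c, ∃ E ∈ famIter F γ, E.Nonempty) : famIota F = c := by
  have hc : famIter F c ⊆ {∅} := fun E hE => by
    by_contra hne
    exact (hμ.le_of_mem_famIter hE (nonempty_iff_ne_empty.2 hne)).not_gt (hμc E)
  refine le_antisymm (csInf_le' hc) (le_csInf ⟨c, hc⟩ fun α hα => not_lt.1 fun hlt => ?_)
  obtain ⟨E, hE, hne⟩ := hlow α hlt
  exact hne.ne_empty (hα hE)

structure IndexCertificate (c : Ordinal) (F : Set (Finset ℕ)) : Prop where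
  isPrefixClosed : IsPrefixClosed F
  exists_singleton_mem_famIter : ∀ γ < c, ∀ N, ∃ n, N ≤ n ∧ {n} ∈ famIter F γ
  exists_isRank : ∃ μ, IsRank F μ ∧ ∀ E, μ E < c

namespace IndexCertificate

variable {c : Ordinal} {F : Set (Finset ℕ)}

theorem famIota_eq (h : IndexCertificate c F) : famIota F = c := by
  obtain ⟨μ, hμ, hμc⟩ := h.exists_isRank
  refine famIota_eq_of_isRank hμ hμc fun γ hγ => ?_
  obtain ⟨n, -, hn⟩ := h.exists_singleton_mem_famIter γ hγ 0
  exact ⟨{n}, hn, singleton_nonempty n⟩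

theorem pos (h : IndexCertificate c F) : 0 < c := by
  obtain ⟨μ, -, hμc⟩ := h.exists_isRank
  exact (hμc ∅).pos

end IndexCertificate

theorem indexCertificate_card_le_one : IndexCertificate 1 {E : Finset ℕ | E.card ≤ 1} where
  isPrefixClosed _ _ n _ h := (card_le_card (subset_insert n _)).trans h
  exists_singleton_mem_famIter γ hγ N := by
    rw [Order.lt_one_iff.1 hγ, famIter_zero]
    exact ⟨N, le_rfl, by simp⟩
  exists_isRank := by
    refine ⟨fun _ => 0, fun E hE n hn h => absurd h ?_, fun _ => zero_lt_one⟩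
    rw [Set.mem_ofPred_eq, card_insert_of_notMem fun hnE => (hn n hnE).false]
    have := hE.card_pos
    omega

def famDiag (Fs : ℕ → Set (Finset ℕ)) : Set (Finset ℕ) :=
  {E : Finset ℕ | ∃ n : ℕ, (∀ m ∈ E, n ≤ m) ∧ E ∈ Fs n}

theorem mem_famIter_famDiag {Fs : ℕ → Set (Finset ℕ)} {k : ℕ} {α : Ordinal} {E : Finset ℕ}
    (hE : E ∈ famIter (Fs k) α) (hne : E.Nonempty) (hk : ∀ m ∈ E, k ≤ m) :
    E ∈ famIter (famDiag Fs) α := by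
  induction α using WellFoundedLT.induction generalizing E with
  | _ α ih =>
  obtain ⟨hEF, hext⟩ := mem_famIter_iff.1 hE
  refine mem_famIter_iff.2 ⟨⟨k, hk, hEF⟩, fun γ hγ => ?_⟩
  obtain ⟨n, hn, hins⟩ := hext γ hγ
  obtain ⟨x, hx⟩ := hne
  refine ⟨n, hn, ih γ hγ hins (insert_nonempty n E) fun m hm => ?_⟩
  rcases mem_insert.1 hm with rfl | hm
  exacts [(hk x hx).trans (hn x hx).le, hk m hm]

theorem IndexCertificate.famDiag {c : Ordinal} {cs : ℕ → Ordinal} {Fs : ℕ → Set (Finset ℕ)}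
    (h : ∀ j, IndexCertificate (cs j) (Fs j)) (hmono : Monotone Fs) (hcs : ∀ j, cs j ≤ c)
    (hcof : ∀ γ < c, ∃ j, γ < cs j) : IndexCertificate c (famDiag Fs) where
  isPrefixClosed E hE n hn := fun ⟨j, hj, hins⟩ =>
    ⟨j, fun m hm => hj m (mem_insert_of_mem hm), (h j).isPrefixClosed E hE n hn hins⟩
  exists_singleton_mem_famIter γ hγ N := by
    obtain ⟨j, hj⟩ := hcof γ hγ
    obtain ⟨n, hn, hmem⟩ := (h j).exists_singleton_mem_famIter γ hj (max N j)
    refine ⟨n, (le_max_left N j).trans hn, mem_famIter_famDiag hmem (singleton_nonempty n) ?_⟩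
    simpa using (le_max_right N j).trans hn
  exists_isRank := by
    classical
    choose μs hμs hμsc using fun j => (h j).exists_isRank
    refine ⟨fun E => if hE : E.Nonempty then μs (E.min' hE) E else 0, ?_, fun E => ?_⟩
    · rintro E hE n hn ⟨j, hj, hins⟩
      have hmin : (insert n E).min' (insert_nonempty n E) = E.min' hE := by
        rw [min'_insert]
        exact min_eq_right (hn _ (E.min'_mem hE)).le
      have hjE : j ≤ E.min' hE := hj _ (mem_insert_of_mem (E.min'_mem hE))
      simp only [dif_pos hE, dif_pos (insert_nonempty n E), hmin]
      exact hμs _ E hE n hn (hmono hjE hins)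
    · dsimp only
      split_ifs with hE
      exacts [(hμsc _ E).trans_le (hcs _), (h 0).pos.trans_le (hcs 0)]

def BlockLt (A B : Finset ℕ) : Prop := ∀ a ∈ A, ∀ b ∈ B, a < b

inductive IsBlockUnion (F : Set (Finset ℕ)) : ℕ → Finset ℕ → Prop
  | empty : IsBlockUnion F 0 ∅
  | snoc {k : ℕ} {A b : Finset ℕ} : IsBlockUnion F k A → b ∈ F → b.Nonempty → BlockLt A b →
      IsBlockUnion F (k + 1) (A ∪ b)

section Blocks

variable {F : Set (Finset ℕ)}

theorem mem_foldr_union {l : List {E : Finset ℕ // E.Nonempty}} {x : ℕ} :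
    x ∈ l.foldr (fun E acc => E.1 ∪ acc) ∅ ↔ ∃ E ∈ l, x ∈ E.1 := by
  induction l with
  | nil => simp
  | cons E l ih =>
    simp only [List.foldr_cons, mem_union, ih, List.mem_cons, or_and_right, exists_or,
      exists_eq_left]

theorem isBlockUnion_foldr (l : List {E : Finset ℕ // E.Nonempty}) (hF : ∀ E ∈ l, E.1 ∈ F)
    (hl : (l.map Subtype.val).Pairwise BlockLt) :
    IsBlockUnion F l.length (l.foldr (fun E acc => E.1 ∪ acc) ∅) := by
  induction l using List.reverseRecOn with
  | nil => exact .empty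
  | append_singleton l b ih =>
    simp only [List.map_append, List.map_cons, List.map_nil, List.pairwise_append,
      List.pairwise_singleton, List.mem_singleton, forall_eq, true_and, List.mem_map] at hl
    have hunion : (l ++ [b]).foldr (fun E acc => E.1 ∪ acc) ∅ =
        l.foldr (fun E acc => E.1 ∪ acc) ∅ ∪ b.1 := by
      ext x
      rw [mem_union, mem_foldr_union, mem_foldr_union]
      simp
    rw [hunion, List.length_append, List.length_singleton]
    refine .snoc (ih (fun E hE => hF E (by simp [hE])) hl.1) (hF b (by simp)) b.2 ?_
    intro a ha y hy
    obtain ⟨E, hE, haE⟩ := mem_foldr_union.1 ha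
    exact hl.2 E.1 ⟨E, hE, rfl⟩ a haE y hy

theorem IsBlockUnion.exists_list {k : ℕ} {A : Finset ℕ} (h : IsBlockUnion F k A) :
    ∃ l : List {E : Finset ℕ // E.Nonempty}, l.length = k ∧ (∀ E ∈ l, E.1 ∈ F) ∧
      (l.map Subtype.val).Pairwise BlockLt ∧ A = l.foldr (fun E acc => E.1 ∪ acc) ∅ := by
  induction h with
  | empty => exact ⟨[], rfl, by simp, by simp, rfl⟩
  | @snoc k A b _ hb hbne hAb ih =>
    obtain ⟨l, rfl, hF, hl, rfl⟩ := ih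
    refine ⟨l ++ [⟨b, hbne⟩], by simp, ?_, ?_, ?_⟩
    · simp only [List.mem_append, List.mem_singleton]
      rintro E (hE | rfl)
      exacts [hF E hE, hb]
    · simp only [List.map_append, List.map_cons, List.map_nil, List.pairwise_append, hl,
        List.pairwise_singleton, List.mem_singleton, forall_eq, true_and, List.mem_map]
      rintro _ ⟨E, hE, rfl⟩ a ha
      exact hAb a (mem_foldr_union.2 ⟨E, hE, ha⟩)
    · ext x
      rw [mem_union, mem_foldr_union, mem_foldr_union]
      simp

theorem pairwise_blockLt_iff_isChain {l : List {E : Finset ℕ // E.Nonempty}} :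
    (l.map Subtype.val).Pairwise BlockLt ↔ (l.map Subtype.val).IsChain BlockLt := by
  let R (E E' : {E : Finset ℕ // E.Nonempty}) : Prop := BlockLt E.1 E'.1
  have : Trans R R R := ⟨fun {_ E₂ _} h₁₂ h₂₃ a ha c hc =>
    (h₁₂ a ha _ (E₂.1.min'_mem E₂.2)).trans (h₂₃ _ (E₂.1.min'_mem E₂.2) c hc)⟩
  rw [List.pairwise_map, List.isChain_map]
  exact List.isChain_iff_pairwise.symm

theorem card_toFinset_map_min' {l : List {E : Finset ℕ // E.Nonempty}}
    (hl : (l.map Subtype.val).Pairwise BlockLt) :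
    (l.map fun E => E.1.min' E.2).toFinset.card = l.length := by
  rw [List.toFinset_card_of_nodup, List.length_map]
  exact List.pairwise_map.2 ((List.pairwise_map.1 hl).imp fun h =>
    (h _ (min'_mem _ _) _ (min'_mem _ _)).ne)

theorem mem_famProd_schreierUnit_iff {H : Finset ℕ} :
    H ∈ famProd schreierUnit F ↔ ∃ k, IsBlockUnion F (k + 1) H ∧ ∀ m ∈ H, k < m := by
  -- `famProd` states its chain condition on `l` coerced through the list monad.
  have hcoe (l : List {E : Finset ℕ // E.Nonempty}) :
      (do let a ← l; pure (a : Finset ℕ)) = l.map Subtype.val := by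
    simp
  simp only [famProd, Set.mem_ofPred_eq, hcoe]
  constructor
  · rintro ⟨l, hne, hF, hc, hS, rfl⟩
    have hl := pairwise_blockLt_iff_isChain.2 hc
    have hlen : l.length - 1 + 1 = l.length := Nat.sub_add_cancel (List.length_pos_iff.2 hne)
    refine ⟨l.length - 1, hlen ▸ isBlockUnion_foldr l hF hl, fun m hm => ?_⟩
    obtain ⟨E, hE, hmE⟩ := mem_foldr_union.1 hm
    have := hS _ (List.mem_toFinset.2 (List.mem_map.2 ⟨E, hE, rfl⟩))
    rw [card_toFinset_map_min' hl, ← hlen] at this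
    exact this.trans (E.1.min'_le m hmE)
  · rintro ⟨k, hH, hk⟩
    obtain ⟨l, hlen, hF, hl, rfl⟩ := hH.exists_list
    refine ⟨l, List.ne_nil_of_length_eq_add_one hlen, hF, pairwise_blockLt_iff_isChain.1 hl,
      fun x hx => ?_, rfl⟩
    obtain ⟨E, hE, rfl⟩ := List.mem_map.1 (List.mem_toFinset.1 hx)
    rw [card_toFinset_map_min' hl, hlen]
    exact hk _ (mem_foldr_union.2 ⟨E, hE, E.1.min'_mem E.2⟩)

end Blocks

/-- `b` is the last block of a decomposition `H = A ∪ b` of `H ∈ 𝒮[F]` into `k + 1` blocks from `F`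
that leaves room (`k + 1 + r ≤ min H`) for `r` more blocks. -/
def IsDecomp (F : Set (Finset ℕ)) (r : ℕ) (b H : Finset ℕ) : Prop :=
  ∃ k A, IsBlockUnion F k A ∧ b ∈ F ∧ b.Nonempty ∧ BlockLt A b ∧ H = A ∪ b ∧
    ∀ m ∈ H, k + r < m

section Decomp

variable {F : Set (Finset ℕ)} {r n : ℕ} {b E H : Finset ℕ}

theorem mem_famProd_iff_exists_isDecomp :
    H ∈ famProd schreierUnit F ↔ ∃ r b, IsDecomp F r b H := by
  rw [mem_famProd_schreierUnit_iff]
  constructor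
  · rintro ⟨k, hH, hk⟩
    cases hH with
    | snoc hA hb hbne hAb => exact ⟨0, _, k, _, hA, hb, hbne, hAb, rfl, hk⟩
  · rintro ⟨r, b, k, A, hA, hb, hbne, hAb, rfl, hr⟩
    exact ⟨k, hA.snoc hb hbne hAb, fun m hm => (k.le_add_right r).trans_lt (hr m hm)⟩

namespace IsDecomp

theorem mem_famProd (hd : IsDecomp F r b H) : H ∈ famProd schreierUnit F :=
  mem_famProd_iff_exists_isDecomp.2 ⟨r, b, hd⟩

theorem last_mem (hd : IsDecomp F r b H) : b ∈ F := by
  obtain ⟨k, A, -, hb, -⟩ := hd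
  exact hb

theorem last_nonempty (hd : IsDecomp F r b H) : b.Nonempty := by
  obtain ⟨k, A, -, -, hbne, -⟩ := hd
  exact hbne

theorem last_subset (hd : IsDecomp F r b H) : b ⊆ H := by
  obtain ⟨k, A, -, -, -, -, rfl, -⟩ := hd
  exact subset_union_right

theorem lt_sup (hd : IsDecomp F r b H) : r < H.sup id := by
  obtain ⟨x, hx⟩ := hd.last_nonempty
  have hxH := hd.last_subset hx
  obtain ⟨k, A, -, -, -, -, -, hr⟩ := hd
  exact ((r.le_add_left k).trans_lt (hr x hxH)).trans_le (le_sup (f := id) hxH)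

theorem forall_lt_of_last (hd : IsDecomp F r b H) (hbn : ∀ m ∈ b, m < n) : ∀ m ∈ H, m < n := by
  obtain ⟨k, A, -, -, ⟨x, hx⟩, hAb, rfl, -⟩ := hd
  intro m hm
  rcases mem_union.1 hm with hm | hm
  exacts [(hAb m hm x hx).trans (hbn x hx), hbn m hm]

theorem insert_last (hd : IsDecomp F r b H) (hb : insert n b ∈ F) (hbn : ∀ m ∈ b, m < n) :
    IsDecomp F r (insert n b) (insert n H) := by
  have hHn := hd.forall_lt_of_last hbn
  obtain ⟨k, A, hA, -, ⟨x, hx⟩, hAb, rfl, hr⟩ := hd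
  refine ⟨k, A, hA, hb, insert_nonempty n b, fun a ha y hy => ?_, (union_insert n A b).symm,
    fun m hm => ?_⟩
  · rcases mem_insert.1 hy with rfl | hy
    exacts [hHn a (mem_union_left b ha), hAb a ha y hy]
  · rcases mem_insert.1 hm with rfl | hm
    exacts [(hr x (mem_union_right A hx)).trans (hbn x hx), hr m hm]

theorem snoc (hd : IsDecomp F (r + 1) b H) (hn : {n} ∈ F) (hHn : ∀ m ∈ H, m < n) :
    IsDecomp F r {n} (insert n H) := by
  obtain ⟨k, A, hA, hb, ⟨x, hx⟩, hAb, rfl, hr⟩ := hd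
  refine ⟨k + 1, A ∪ b, hA.snoc hb ⟨x, hx⟩ hAb, hn, singleton_nonempty n, fun a ha y hy => ?_,
    by rw [insert_eq, union_comm], fun m hm => ?_⟩
  · rw [mem_singleton.1 hy]
    exact hHn a ha
  · rcases mem_insert.1 hm with rfl | hm
    · have := hr x (mem_union_right A hx)
      have := hHn x (mem_union_right A hx)
      omega
    · have := hr m hm
      omega

theorem of_insert (hF : IsPrefixClosed F) (hd : IsDecomp F r b (insert n E)) (hE : E.Nonempty)
    (hn : ∀ m ∈ E, m < n) :
    (b = {n} ∧ ∃ b', IsDecomp F (r + 1) b' E) ∨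
      ∃ b', (∀ m ∈ b', m < n) ∧ insert n b' = b ∧ IsDecomp F r b' E := by
  obtain ⟨k, A, hA, hb, hbne, hAb, hH, hr⟩ := hd
  have hnE : n ∉ E := fun h => (hn n h).false
  have hle : ∀ m ∈ A ∪ b, m ≤ n := by
    rw [← hH]
    intro m hm
    rcases mem_insert.1 hm with rfl | hm
    exacts [le_rfl, (hn m hm).le]
  have hnA : n ∉ A := fun h => by
    obtain ⟨x, hx⟩ := hbne
    exact (hAb n h x hx).not_ge (hle x (mem_union_right A hx))
  have hnb : n ∈ b := (mem_union.1 (hH ▸ mem_insert_self n E)).resolve_left hnA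
  have hEeq : E = A ∪ b.erase n := by
    rw [← erase_eq_of_notMem hnA, ← erase_union_distrib, ← hH, erase_insert hnE]
  by_cases hbn : b = {n}
  · subst hbn
    rw [erase_singleton, union_empty] at hEeq
    subst hEeq
    cases hA with
    | empty => exact absurd hE not_nonempty_empty
    | snoc hA' hb' hb'ne hA'b' =>
      refine .inl ⟨rfl, _, _, _, hA', hb', hb'ne, hA'b', rfl, fun m hm => ?_⟩
      have := hr m (mem_insert_of_mem hm)
      omega
  · have hb'ne : (b.erase n).Nonempty := nonempty_iff_ne_empty.2 fun h =>
      ((erase_eq_empty_iff b n).1 h).elim hbne.ne_empty hbn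
    have hb'n : ∀ m ∈ b.erase n, m < n := fun m hm =>
      (hle m (mem_union_right A (mem_of_mem_erase hm))).lt_of_ne (ne_of_mem_erase hm)
    refine .inr ⟨b.erase n, hb'n, insert_erase hnb, k, A, hA,
      hF _ hb'ne n hb'n (by rwa [insert_erase hnb]), hb'ne,
      fun a ha y hy => hAb a ha y (mem_of_mem_erase hy), hEeq,
      fun m hm => hr m (mem_insert_of_mem hm)⟩

end IsDecomp

theorem isDecomp_singleton (hn : {n} ∈ F) (hr : r < n) : IsDecomp F r {n} {n} :=
  ⟨0, ∅, .empty, hn, singleton_nonempty n, by simp [BlockLt], by simp, by simpa using hr⟩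

theorem IsPrefixClosed.famProd (hF : IsPrefixClosed F) :
    IsPrefixClosed (famProd schreierUnit F) := by
  intro E hE n hn hins
  obtain ⟨r, b, hd⟩ := mem_famProd_iff_exists_isDecomp.1 hins
  rcases hd.of_insert hF hE hn with ⟨-, b', hd'⟩ | ⟨b', -, -, hd'⟩ <;> exact hd'.mem_famProd

end Decomp

section Rank

variable {F : Set (Finset ℕ)} {c : Ordinal} {μ : Finset ℕ → Ordinal} {r n : ℕ} {b E H : Finset ℕ}

open scoped Classical in
noncomputable def decomps (F : Set (Finset ℕ)) (H : Finset ℕ) : Finset (ℕ × Finset ℕ) :=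
  (range (H.sup id) ×ˢ H.powerset).filter fun q => IsDecomp F q.1 q.2 H

theorem mem_decomps {q : ℕ × Finset ℕ} : q ∈ decomps F H ↔ IsDecomp F q.1 q.2 H := by
  simp only [decomps, mem_filter, mem_product, mem_range, mem_powerset]
  exact ⟨fun h => h.2, fun h => ⟨⟨h.lt_sup, h.last_subset⟩, h⟩⟩

noncomputable def prodRank (F : Set (Finset ℕ)) (c : Ordinal) (μ : Finset ℕ → Ordinal)
    (H : Finset ℕ) : Ordinal :=
  (decomps F H).sup fun q => c * q.1 + μ q.2 + 1

theorem IsDecomp.le_prodRank (hd : IsDecomp F r b H) : c * r + μ b + 1 ≤ prodRank F c μ H :=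
  le_sup (f := fun q : ℕ × Finset ℕ => c * q.1 + μ q.2 + 1) ((mem_decomps (q := (r, b))).2 hd)

theorem exists_isDecomp_prodRank_eq (hH : H ∈ famProd schreierUnit F) :
    ∃ r b, IsDecomp F r b H ∧ prodRank F c μ H = c * r + μ b + 1 := by
  obtain ⟨r, b, hd⟩ := mem_famProd_iff_exists_isDecomp.1 hH
  obtain ⟨q, hq, heq⟩ := exists_mem_eq_sup (decomps F H) ⟨(r, b), mem_decomps.2 hd⟩
    fun q => c * q.1 + μ q.2 + 1
  exact ⟨q.1, q.2, mem_decomps.1 hq, heq⟩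

theorem mul_natCast_add_add_one_le {a : Ordinal} (r : ℕ) (ha : a < c) :
    c * r + a + 1 ≤ c * ↑(r + 1) := by
  rw [add_assoc, Nat.cast_succ, mul_add_one]
  exact add_le_add_right (Order.add_one_le_of_lt ha) _

theorem prodRank_lt (hμc : ∀ E, μ E < c) (H : Finset ℕ) : prodRank F c μ H < c * ω := by
  have hc : 0 < c := (hμc ∅).pos
  refine (Finset.sup_lt_iff (mul_pos hc omega0_pos)).2 fun q _ => ?_
  exact (mul_natCast_add_add_one_le q.1 (hμc q.2)).trans_lt
    (mul_lt_mul_of_pos_left (natCast_lt_omega0 _) hc)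

theorem IsRank.prodRank (hμ : IsRank F μ) (hF : IsPrefixClosed F) (hμc : ∀ E, μ E < c) :
    IsRank (famProd schreierUnit F) (prodRank F c μ) := by
  intro E hE n hn hins
  obtain ⟨r, b, hd, heq⟩ := exists_isDecomp_prodRank_eq (c := c) (μ := μ) hins
  rw [heq]
  rcases hd.of_insert hF hE hn with ⟨rfl, b', hd'⟩ | ⟨b', hb'n, rfl, hd'⟩
  · calc c * r + μ {n} + 1 ≤ c * ↑(r + 1) := mul_natCast_add_add_one_le r (hμc _)
      _ < c * ↑(r + 1) + μ b' + 1 := by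
        rw [add_assoc]
        exact lt_add_of_pos_right _ (Order.lt_add_one_iff.2 zero_le)
      _ ≤ _ := hd'.le_prodRank
  · have hlt := hμ b' hd'.last_nonempty n hb'n hd.last_mem
    calc c * r + μ (insert n b') + 1 < c * r + μ b' + 1 := by
          rw [add_assoc, add_assoc]
          exact add_lt_add_right (Order.lt_add_one_iff.2 (Order.add_one_le_of_lt hlt)) _
      _ ≤ _ := hd'.le_prodRank

end Rank

theorem IsDecomp.mem_famIter_famProd {F : Set (Finset ℕ)} {c : Ordinal} (hc : c ≠ 0)
    (hlow : ∀ γ < c, ∀ N, ∃ n, N ≤ n ∧ {n} ∈ famIter F γ) {δ β : Ordinal} {r : ℕ}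
    {b H : Finset ℕ} (hd : IsDecomp F r b H) (hb : b ∈ famIter F β) (hδ : δ ≤ c * r + β) :
    H ∈ famIter (famProd schreierUnit F) δ := by
  induction δ using WellFoundedLT.induction generalizing β r b H with
  | _ δ ih =>
  refine mem_famIter_iff.2 ⟨hd.mem_famProd, fun γ hγ => ?_⟩
  rcases eq_or_ne β 0 with rfl | hβ
  · have hγr : γ < c * r := by simpa using hγ.trans_le hδ
    obtain ⟨r, rfl⟩ := Nat.exists_eq_add_one_of_ne_zero (show r ≠ 0 by rintro rfl; simp at hγr)
    obtain ⟨γ', hγ'c, hγγ'⟩ := (lt_add_iff hc).1 (by rwa [Nat.cast_succ, mul_add_one] at hγr)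
    obtain ⟨n, hn, hmem⟩ := hlow γ' hγ'c (H.sup id + 1)
    have hHn : ∀ m ∈ H, m < n := fun m hm => (le_sup (f := id) hm).trans_lt hn
    exact ⟨n, hHn, ih γ hγ (hd.snoc (mem_of_mem_famIter hmem) hHn) hmem hγγ'⟩
  · obtain ⟨β', hβ', hγβ'⟩ := (lt_add_iff hβ).1 (hγ.trans_le hδ)
    obtain ⟨n, hbn, hins⟩ := (mem_famIter_iff.1 hb).2 β' hβ'
    exact ⟨n, hd.forall_lt_of_last hbn,
      ih γ hγ (hd.insert_last (mem_of_mem_famIter hins) hbn) hins hγβ'⟩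

theorem IndexCertificate.famProd {c : Ordinal} {F : Set (Finset ℕ)} (h : IndexCertificate c F) :
    IndexCertificate (c * ω) (famProd schreierUnit F) where
  isPrefixClosed := h.isPrefixClosed.famProd
  exists_singleton_mem_famIter γ hγ N := by
    obtain ⟨r', hr', hγr⟩ := (lt_mul_iff_of_isSuccLimit isSuccLimit_omega0).1 hγ
    obtain ⟨r, rfl⟩ := lt_omega0.1 hr'
    obtain ⟨n, hn, hmem⟩ := h.exists_singleton_mem_famIter 0 h.pos (max N (r + 1))
    have hd : IsDecomp F r {n} {n} := isDecomp_singleton (mem_of_mem_famIter hmem) (by omega)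
    exact ⟨n, (le_max_left _ _).trans hn, hd.mem_famIter_famProd h.pos.ne'
      h.exists_singleton_mem_famIter hmem (by simpa using hγr.le)⟩
  exists_isRank := by
    obtain ⟨μ, hμ, hμc⟩ := h.exists_isRank
    exact ⟨prodRank F c μ, hμ.prodRank h.isPrefixClosed hμc, prodRank_lt hμc⟩

theorem IsSchreier.indexCertificate {ξ : Ordinal} {F : Set (Finset ℕ)} (hF : IsSchreier ξ F) :
    IndexCertificate (ω ^ ξ) F := by
  induction hF with
  | zero => simpa using indexCertificate_card_le_one
  | succ ξ F _ ih => rw [opow_add_one]; exact ih.famProd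
  | limit ξ hξ o Fs _ ho hcof _ hstep ih =>
    refine IndexCertificate.famDiag ih (monotone_nat_of_le_succ hstep)
      (fun j => opow_le_opow_right omega0_pos (hξ.add_one_lt (ho j)).le) fun γ hγ => ?_
    obtain ⟨ζ, hζ, hγζ⟩ := (lt_opow_of_isSuccLimit omega0_ne_zero hξ).1 hγ
    obtain ⟨j, hj⟩ := hcof ζ hζ
    exact ⟨j, hγζ.trans_le (opow_le_opow_right omega0_pos (hj.trans le_self_add))⟩

theorem famIota_schreier_general (ξ : Ordinal)
    (F : Set (Finset ℕ)) (hF : IsSchreier ξ F) :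
    famIota F = Ordinal.omega0 ^ ξ :=
  hF.indexCertificate.famIota_eq

/-- For every countable ordinal `ξ`, any Schreier family of order `ξ` has
Cantor–Bendixson-type index `ι(𝒮_ξ) = ω^ξ`. -/
theorem famIota_schreier (ξ : Ordinal) (hξ : ξ.card ≤ Cardinal.aleph0)
    (F : Set (Finset ℕ)) (hF : IsSchreier ξ F) :
    famIota F = Ordinal.omega0 ^ ξ :=
  famIota_schreier_general ξ F hF
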